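/- arXiv:1201.3261 — 5 statements merged into one kernel-verified Lean document; each statement's English description precedes it below -/
import Mathlib

section
/- Let n be odd and let Q0 be the distribution on n bits where X_1,...,X_{n-1} are IID uniform bits and X_n equals the sum of X_1,...,X_{n-1} modulo 2. Then Q0 is (n-1)-wise independent with marginal 1/2, and |Q0(Maj_n = 1) - 1/2| ≥ 1/(3√n). -/
open Finset
open scoped Classical

/-- `Q` is a `k`-wise independent distribution on bits indexed by `ι`,
with each bit equal to `true` with probability `p`. -/
def kwise {ι : Type} [Fintype ι] [DecidableEq ι] (k : ℕ) (p : ℝ)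
    (Q : (ι → Bool) → ℝ) : Prop :=
  (∀ x, 0 ≤ Q x) ∧ (∑ x, Q x = 1) ∧
  ∀ S : Finset ι, S.card ≤ k → ∀ b : ι → Bool,
    (∑ x ∈ univ.filter (fun x => ∀ i ∈ S, x i = b i), Q x)
      = ∏ i ∈ S, (if b i then p else 1 - p)

/-- Probability of the event `E` under the distribution `Q`. -/
noncomputable def pr {ι : Type} [Fintype ι] [DecidableEq ι]
    (Q : (ι → Bool) → ℝ) (E : (ι → Bool) → Prop) : ℝ :=
  ∑ x, if E x then Q x else 0

/-- Number of bits equal to `true`. -/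
def cnt {ι : Type} [Fintype ι] [DecidableEq ι] (x : ι → Bool) : ℕ :=
  (univ.filter (fun i => x i = true)).card

/-!
Write the parity density as `2⁻ⁿ (1 + (-1) ^ |x|)`. On the cylinder of vectors with prescribed
bits on `S ≠ univ`, the character `(-1) ^ |x|` factors over the coordinates and the factor of a
free coordinate is `1 - 1 = 0`, so only the uniform part survives: this is `(n - 1)`-wise
independence. For the majority event with `n = 2m + 1`, the uniform part gives `1/2` and the
character part gives `2⁻ⁿ ∑_{k > m} (-1)ᵏ C(n, k) = -(-1)ᵐ 2⁻ⁿ C(2m, m)`, and the Wallis-type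
bound `16ᵐ ≤ (4m + 1) C(2m, m)²` turns `2⁻ⁿ C(2m, m)` into at least `1 / (3 √n)`.
-/

section BoolVectors

variable {ι : Type} [Fintype ι] [DecidableEq ι]

abbrev cylinder (S : Finset ι) (b : ι → Bool) : Finset (ι → Bool) :=
  univ.filter (fun x => ∀ i ∈ S, x i = b i)

theorem sum_cylinder_prod {R : Type*} [CommSemiring R] (S : Finset ι) (b : ι → Bool)
    (w : ι → Bool → R) :
    ∑ x ∈ cylinder S b, ∏ i, w i (x i)
      = (∏ i ∈ S, w i (b i)) * ∏ i ∈ Sᶜ, (w i true + w i false) := by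
  set v : ι → Bool → R := fun i t => if i ∈ S then (if t = b i then w i t else 0) else w i t
  have hfactor (x : ι → Bool) :
      (if ∀ i ∈ S, x i = b i then ∏ i, w i (x i) else 0) = ∏ i, v i (x i) := by
    split_ifs with h
    · exact prod_congr rfl fun i _ => by by_cases hi : i ∈ S <;> simp [v, hi, h i]
    · obtain ⟨i, hi, hne⟩ := not_forall₂.1 h
      exact (prod_eq_zero (mem_univ i) (by simp [v, hi, hne])).symm
  rw [sum_filter, Finset.sum_congr rfl (fun x _ => hfactor x), (Fintype.prod_sum v).symm,
    ← prod_mul_prod_compl S]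
  congr 1 <;> refine prod_congr rfl fun i hi => ?_
  · simp only [v, Fintype.sum_bool, if_pos hi]
    cases b i <;> simp
  · simp [v, mem_compl.1 hi]

theorem card_cylinder (S : Finset ι) (b : ι → Bool) :
    #(cylinder S b) = 2 ^ (Fintype.card ι - #S) := by
  simpa [← card_compl] using sum_cylinder_prod S b (fun _ _ => (1 : ℕ))

theorem neg_one_pow_cnt {R : Type*} [CommRing R] (x : ι → Bool) :
    (-1 : R) ^ cnt x = ∏ i, (if x i then -1 else 1) := by
  simp [prod_ite, cnt]

theorem sum_cylinder_neg_one_pow_cnt {R : Type*} [CommRing R] {S : Finset ι} (hS : S ≠ univ)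
    (b : ι → Bool) : ∑ x ∈ cylinder S b, (-1 : R) ^ cnt x = 0 := by
  obtain ⟨j, hj⟩ : ∃ j, j ∉ S := by simpa [eq_univ_iff_forall] using hS
  simp_rw [neg_one_pow_cnt]
  rw [sum_cylinder_prod S b (fun _ t => if t then (-1 : R) else 1),
    prod_eq_zero (mem_compl.2 hj) (by simp), mul_zero]

theorem sum_apply_cnt {M : Type*} [AddCommMonoid M] (f : ℕ → M) :
    ∑ x : ι → Bool, f (cnt x)
      = ∑ k ∈ range (Fintype.card ι + 1), (Fintype.card ι).choose k • f k := by
  rw [← card_univ, ← sum_powerset_apply_card, powerset_univ]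
  exact Fintype.sum_equiv
    { toFun := fun x => univ.filter (fun i => x i = true)
      invFun := fun s i => decide (i ∈ s)
      left_inv := fun x => by ext i; simp
      right_inv := fun s => by ext i; simp } _ _ fun _ => rfl

end BoolVectors

section EvenWeight

variable {ι : Type} [Fintype ι] [DecidableEq ι]

variable (ι) in
noncomputable def evenWeightDist (x : ι → Bool) : ℝ :=
  if Even (cnt x) then (1 / 2 : ℝ) ^ (Fintype.card ι - 1) else 0

theorem evenWeightDist_eq [Nonempty ι] (x : ι → Bool) :
    evenWeightDist ι x = (1 / 2) ^ Fintype.card ι * (1 + (-1) ^ cnt x) := by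
  obtain ⟨k, hk⟩ := Nat.exists_eq_succ_of_ne_zero (Fintype.card_ne_zero (α := ι))
  simp only [evenWeightDist, hk, Nat.succ_sub_one, pow_succ]
  rcases Nat.even_or_odd (cnt x) with h | h
  · rw [if_pos h, h.neg_one_pow]
    ring
  · rw [if_neg (Nat.not_even_iff_odd.2 h), h.neg_one_pow]
    ring

theorem sum_cylinder_evenWeightDist [Nonempty ι] {S : Finset ι} (hS : S ≠ univ)
    (b : ι → Bool) :
    ∑ x ∈ cylinder S b, evenWeightDist ι x = (1 / 2) ^ #S := by
  simp_rw [evenWeightDist_eq, ← mul_sum, sum_add_distrib, sum_cylinder_neg_one_pow_cnt hS,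
    sum_const, card_cylinder]
  obtain ⟨k, hk⟩ := Nat.exists_eq_add_of_le (card_le_univ S)
  rw [hk, Nat.add_sub_cancel_left, pow_add, nsmul_eq_mul, mul_one, add_zero, mul_assoc,
    Nat.cast_pow, Nat.cast_two, ← mul_pow]
  norm_num

theorem kwise_evenWeightDist [Nonempty ι] :
    kwise (Fintype.card ι - 1) (1 / 2) (evenWeightDist ι) := by
  refine ⟨fun x => ?_, ?_, fun S hS b => ?_⟩
  · unfold evenWeightDist
    split_ifs <;> positivity
  · simpa [cylinder] using
      sum_cylinder_evenWeightDist (univ_nonempty (α := ι)).ne_empty.symm (fun _ => false)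
  · have hSu : S ≠ univ := by
      rintro rfl
      have := Fintype.card_pos (α := ι)
      simp at hS
      omega
    rw [sum_cylinder_evenWeightDist hSu]
    norm_num [div_pow]

end EvenWeight

namespace Nat

theorem sum_Ico_choose_upper_half (m : ℕ) :
    ∑ k ∈ Ico (m + 1) (2 * m + 2), (2 * m + 1).choose k = 4 ^ m := by
  have h := sum_range_add_sum_Ico (fun k => (2 * m + 1).choose k) (by omega : m + 1 ≤ 2 * m + 2)
  rw [sum_range_choose_halfway, sum_range_choose (2 * m + 1), pow_succ, pow_mul] at h
  norm_num at h
  omega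

theorem alternating_sum_Ico_choose_upper_half (m : ℕ) :
    ∑ k ∈ Ico (m + 1) (2 * m + 2), (-1 : ℤ) ^ k * (2 * m + 1).choose k
      = -((-1) ^ m * centralBinom m) := by
  have h := sum_range_add_sum_Ico (fun k => (-1 : ℤ) ^ k * (2 * m + 1).choose k)
    (by omega : m + 1 ≤ 2 * m + 2)
  rw [Int.alternating_sum_range_choose_eq_choose,
    Int.alternating_sum_range_choose_of_ne (n := 2 * m + 1) (by omega)] at h
  rw [centralBinom_eq_two_mul_choose]
  linarith

theorem sixteen_pow_le_mul_centralBinom_sq (m : ℕ) :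
    16 ^ m ≤ (4 * m + 1) * centralBinom m ^ 2 := by
  induction m with
  | zero => simp
  | succ m ih =>
    have hrec := succ_mul_centralBinom_succ m
    refine Nat.le_of_mul_le_mul_left ?_ (show 0 < (m + 1) ^ 2 by positivity)
    calc (m + 1) ^ 2 * 16 ^ (m + 1) = 16 * (m + 1) ^ 2 * 16 ^ m := by ring
      _ ≤ 16 * (m + 1) ^ 2 * ((4 * m + 1) * centralBinom m ^ 2) := by gcongr
      _ ≤ 4 * (4 * m + 5) * (2 * m + 1) ^ 2 * centralBinom m ^ 2 := by
        have : 4 * (4 * m + 1) * (m + 1) ^ 2 ≤ (4 * m + 5) * (2 * m + 1) ^ 2 := by ring_nf; omega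
        nlinarith [Nat.zero_le (centralBinom m ^ 2)]
      _ = (m + 1) ^ 2 * ((4 * (m + 1) + 1) * centralBinom (m + 1) ^ 2) := by
        rw [show (m + 1) ^ 2 * ((4 * (m + 1) + 1) * centralBinom (m + 1) ^ 2)
          = (4 * m + 5) * ((m + 1) * centralBinom (m + 1)) ^ 2 by ring, hrec]
        ring

theorem one_div_three_sqrt_le_centralBinom_div (m : ℕ) :
    1 / (3 * Real.sqrt ((2 * m + 1 : ℕ) : ℝ)) ≤ centralBinom m / 2 ^ (2 * m + 1) := by
  have hC : (0 : ℝ) < centralBinom m := by exact_mod_cast centralBinom_pos m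
  rw [div_le_div_iff₀ (by positivity) (by positivity), one_mul]
  have hnat : 4 * 16 ^ m ≤ 9 * (2 * m + 1) * centralBinom m ^ 2 := by
    have := sixteen_pow_le_mul_centralBinom_sq m
    nlinarith [Nat.zero_le (centralBinom m ^ 2)]
  refine (pow_le_pow_iff_left₀ (by positivity) (by positivity) two_ne_zero).1 ?_
  have hpow : ((2 : ℝ) ^ (2 * m + 1)) ^ 2 = 4 * 16 ^ m := by
    rw [show (16 : ℝ) ^ m = 2 ^ (4 * m) by rw [pow_mul]; norm_num, ← pow_mul]
    ring
  rw [hpow, mul_pow, mul_pow, Real.sq_sqrt (by positivity)]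
  have : (4 * 16 ^ m : ℝ) ≤ 9 * (2 * m + 1) * centralBinom m ^ 2 := by exact_mod_cast hnat
  push_cast
  linarith

end Nat

theorem pr_evenWeightDist_majority {ι : Type} [Fintype ι] [DecidableEq ι] {m : ℕ}
    (hι : Fintype.card ι = 2 * m + 1) :
    pr (evenWeightDist ι) (fun x => 2 * cnt x > 2 * m + 1)
      = 1 / 2 - (-1) ^ m * Nat.centralBinom m / 2 ^ (2 * m + 1) := by
  have : Nonempty ι := Fintype.card_pos_iff.1 (by omega)
  set g : ℕ → ℝ := fun k => if 2 * k > 2 * m + 1 then 1 + (-1) ^ k else 0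
  have hlow : ∑ k ∈ range (m + 1), (2 * m + 1).choose k • g k = 0 :=
    sum_eq_zero fun k hk => by simp [g, show ¬ 2 * k > 2 * m + 1 by simp at hk; omega]
  have hhigh : ∀ k ∈ Ico (m + 1) (2 * m + 2), (2 * m + 1).choose k • g k
      = ((2 * m + 1).choose k : ℝ) + (-1) ^ k * (2 * m + 1).choose k := fun k hk => by
    simp only [g, if_pos (show 2 * k > 2 * m + 1 by simp at hk; omega), nsmul_eq_mul]
    ring
  have hup : ∑ k ∈ Ico (m + 1) (2 * m + 2), ((2 * m + 1).choose k : ℝ) = 4 ^ m := by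
    exact_mod_cast Nat.sum_Ico_choose_upper_half m
  have halt : ∑ k ∈ Ico (m + 1) (2 * m + 2), (-1 : ℝ) ^ k * (2 * m + 1).choose k
      = -((-1) ^ m * Nat.centralBinom m) := by
    exact_mod_cast Nat.alternating_sum_Ico_choose_upper_half m
  calc pr (evenWeightDist ι) (fun x => 2 * cnt x > 2 * m + 1)
      = (1 / 2) ^ (2 * m + 1) * ∑ x : ι → Bool, g (cnt x) := by
        simp only [pr, evenWeightDist_eq, hι, mul_sum, g, mul_ite, mul_zero]
    _ = (1 / 2) ^ (2 * m + 1) * (4 ^ m - (-1) ^ m * Nat.centralBinom m) := by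
        rw [sum_apply_cnt, hι, ← sum_range_add_sum_Ico _ (by omega : m + 1 ≤ 2 * m + 1 + 1),
          hlow, zero_add, sum_congr rfl hhigh, sum_add_distrib, hup, halt, sub_eq_add_neg]
    _ = 1 / 2 - (-1) ^ m * Nat.centralBinom m / 2 ^ (2 * m + 1) := by
        rw [show (4 : ℝ) ^ m = 2 ^ (2 * m) by rw [pow_mul]; norm_num, one_div_pow, pow_succ]
        field_simp

/-- The XOR0 distribution (last bit is the parity of the first `n-1` IID uniform bits,
i.e. uniform on vectors with an even number of ones) is `(n-1)`-wise independent with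
marginal `1/2`, and gives majority a probability at least `1/(3√n)` away from `1/2`. -/
theorem xor0_majority_bias (n : ℕ) (hn : Odd n)
    (Q0 : (Fin n → Bool) → ℝ)
    (hQ0 : Q0 = fun x => if Even (cnt x) then (1 / 2 : ℝ) ^ (n - 1) else 0) :
    kwise (n - 1) (1 / 2 : ℝ) Q0 ∧
    |pr Q0 (fun x => 2 * cnt x > n) - 1 / 2| ≥ 1 / (3 * Real.sqrt n) := by
  obtain ⟨m, rfl⟩ := hn
  have hdist : Q0 = evenWeightDist (Fin (2 * m + 1)) := by
    ext x
    rw [hQ0, evenWeightDist, Fintype.card_fin]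
  subst hdist
  refine ⟨by simpa using kwise_evenWeightDist (ι := Fin (2 * m + 1)), ?_⟩
  rw [pr_evenWeightDist_majority (Fintype.card_fin _), sub_sub_cancel_left, abs_neg, abs_div,
    abs_mul, abs_neg_one_pow, one_mul, Nat.abs_cast, abs_pow, abs_two]
  exact Nat.one_div_three_sqrt_le_centralBinom_div m
end

section
/- Linear programming duality for k-wise independence: for any boolean function f: {0,1}^n → {0,1}, any k and any 0 < p < 1, the maximum of Q(f=1) over all k-wise independent distributions Q with marginal p equals the minimum of E_{P_p}[P(X_1,...,X_n)] over all real polynomials P of degree at most k satisfying P ≥ f on all points of the boolean cube, where P_p is the fully independent product measure with marginal p. -/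
open Finset
open scoped Classical

/-!
Weak duality is positivity: if `Q` is `k`-wise independent with marginal `p` and `P ≥ f` has degree
at most `k`, then `Q(f = 1) ≤ E_Q[P] = E_{P_p}[P]`, since `E_Q` and `E_{P_p}` agree on the indicators
of subcubes of codimension at most `k`, and these span the functions of degree at most `k`. Thus the
`k`-wise independent distributions with marginal `p` are exactly the positive linear functionals on
functions on the cube that extend `E_{P_p}` from the functions of degree at most `k`. For the
converse inequality, extend `E_{P_p}` to the span of these functions and `f` by sending `f` to the
dual value `inf {E_{P_p}[P] : P ≥ f}`; this stays positive, and the M. Riesz extension theorem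
extends it to a positive functional on all functions, i.e. to a `k`-wise independent distribution
attaining the dual value.
-/

namespace LinearPMap

variable {E : Type*} [AddCommGroup E] [PartialOrder E] [IsOrderedAddMonoid E] [Module ℝ E]
  {f : E →ₗ.[ℝ] ℝ}

theorem apply_mono (hf : ∀ x : f.domain, 0 ≤ (x : E) → 0 ≤ f x) {x x' : f.domain}
    (h : (x : E) ≤ x') : f x ≤ f x' := by
  have := hf (x' - x) (by simpa [sub_nonneg] using h)
  rwa [map_sub, sub_nonneg] at this

variable [PosSMulMono ℝ E]

/-- The inductive step of the M. Riesz extension theorem, with the new value `c` at `y` allowed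
anywhere between the values of `f` below `y` and those above `y`. -/
theorem nonneg_supSpanSingleton (hf : ∀ x : f.domain, 0 ≤ (x : E) → 0 ≤ f x) {y : E}
    (hy : y ∉ f.domain) {c : ℝ} (hlow : ∀ x : f.domain, (x : E) ≤ y → f x ≤ c)
    (hup : ∀ x : f.domain, y ≤ x → c ≤ f x) (z : (f.supSpanSingleton y c hy).domain)
    (hz : 0 ≤ (z : E)) : 0 ≤ f.supSpanSingleton y c hy z := by
  obtain ⟨z, hz'⟩ := z
  obtain ⟨x, hx, _, ht, rfl⟩ := Submodule.mem_sup.1 hz'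
  obtain ⟨t, rfl⟩ := Submodule.mem_span_singleton.1 ht
  rw [supSpanSingleton_apply_mk _ _ _ _ _ hx, RingHom.id_apply, smul_eq_mul]
  rcases lt_trichotomy t 0 with ht | rfl | ht
  · have above : y ≤ (-t)⁻¹ • x := by
      have := smul_nonneg (inv_nonneg.2 (neg_nonneg.2 ht.le)) hz
      have hinv : (-t)⁻¹ * t = -1 := by rw [inv_neg, neg_mul, inv_mul_cancel₀ ht.ne]
      rwa [smul_add, smul_smul, hinv, neg_one_smul, ← sub_eq_add_neg, sub_nonneg] at this
    have := hup ((-t)⁻¹ • ⟨x, hx⟩) above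
    rw [map_smul, smul_eq_mul, le_inv_mul_iff₀ (neg_pos.2 ht)] at this
    linarith
  · simpa using hf ⟨x, hx⟩ (by simpa using hz)
  · have below : -(t⁻¹ • x) ≤ y := by
      have := smul_nonneg (inv_nonneg.2 ht.le) hz
      rwa [smul_add, smul_smul, inv_mul_cancel₀ ht.ne', one_smul, ← sub_neg_eq_add,
        sub_nonneg, neg_le] at this
    have := hlow (-(t⁻¹ • ⟨x, hx⟩)) below
    rw [map_neg, map_smul, smul_eq_mul, neg_le, le_inv_mul_iff₀ ht] at this
    linarith

theorem isGreatest_nonneg_extension_apply (hf : ∀ x : f.domain, 0 ≤ (x : E) → 0 ≤ f x)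
    (hcofinal : ∀ y : E, ∃ x : f.domain, y ≤ x) (y : E) :
    IsGreatest {v | ∃ g : E →ₗ[ℝ] ℝ, (∀ x : f.domain, g x = f x) ∧ (∀ x, 0 ≤ x → 0 ≤ g x) ∧
      v = g y} (sInf (f '' {x | y ≤ (x : E)})) := by
  set c := sInf (f '' {x | y ≤ (x : E)})
  have hne : (f '' {x | y ≤ (x : E)}).Nonempty :=
    let ⟨x, hx⟩ := hcofinal y; ⟨f x, x, hx, rfl⟩
  have hbdd : BddBelow (f '' {x | y ≤ (x : E)}) := by
    obtain ⟨x₀, hx₀⟩ := hcofinal (-y)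
    exact ⟨f (-x₀), by
      rintro _ ⟨x, hx, rfl⟩
      exact apply_mono hf ((neg_le.1 hx₀).trans hx)⟩
  have hlow : ∀ x : f.domain, (x : E) ≤ y → f x ≤ c := fun x hx =>
    le_csInf hne (by rintro _ ⟨x', hx', rfl⟩; exact apply_mono hf (hx.trans hx'))
  have hup : ∀ x : f.domain, y ≤ x → c ≤ f x := fun x hx => csInf_le hbdd ⟨x, hx, rfl⟩
  obtain ⟨F, hfF, ⟨hyF, hFy⟩, hF⟩ : ∃ F : E →ₗ.[ℝ] ℝ, f ≤ F ∧
      (∃ hy : y ∈ F.domain, F ⟨y, hy⟩ = c) ∧ ∀ x : F.domain, 0 ≤ (x : E) → 0 ≤ F x := by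
    by_cases hy : y ∈ f.domain
    · exact ⟨f, le_rfl, ⟨hy, le_antisymm (hlow ⟨y, hy⟩ le_rfl) (hup ⟨y, hy⟩ le_rfl)⟩, hf⟩
    · exact ⟨f.supSpanSingleton y c hy, LinearPMap.left_le_sup _ _ _,
        ⟨_, supSpanSingleton_apply_self _ _ hy⟩, nonneg_supSpanSingleton hf hy hlow hup⟩
  obtain ⟨g, hgF, hg⟩ := riesz_extension (PointedCone.positive ℝ E) F hF fun z =>
    let ⟨x, hx⟩ := hcofinal (-z)
    ⟨⟨x, hfF.1 x.2⟩, show 0 ≤ (x : E) + z by simpa [neg_le_iff_add_nonneg] using hx⟩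
  refine ⟨⟨g, fun x => (hgF ⟨x, hfF.1 x.2⟩).trans (hfF.2 rfl).symm, hg, ?_⟩, ?_⟩
  · rw [hgF ⟨y, hyF⟩, hFy]
  · rintro _ ⟨g, hgf, hg, rfl⟩
    refine le_csInf hne ?_
    rintro _ ⟨x, hx, rfl⟩
    have := hg (x - y) (sub_nonneg.2 hx)
    rwa [_root_.map_sub, sub_nonneg, hgf] at this

end LinearPMap

theorem MvPolynomial.card_support_le_totalDegree {σ R : Type*} [CommSemiring R]
    {P : MvPolynomial σ R} {m : σ →₀ ℕ} (hm : m ∈ P.support) : #m.support ≤ P.totalDegree := by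
  refine le_trans ?_ (MvPolynomial.le_totalDegree hm)
  rw [Finset.card_eq_sum_ones]
  exact Finset.sum_le_sum fun i hi => Nat.one_le_iff_ne_zero.2 (Finsupp.mem_support_iff.1 hi)

theorem nonneg_iff_forall_dotProduct_nonneg {α : Type*} [Fintype α] (Q : α → ℝ) :
    (∀ x, 0 ≤ Q x) ↔ ∀ u, 0 ≤ u → 0 ≤ Q ⬝ᵥ u :=
  ⟨fun hQ _ hu => dotProduct_nonneg_of_nonneg hQ hu, fun hQ x => by
    simpa using hQ (Pi.single x 1) (Pi.single_nonneg.2 zero_le_one)⟩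

namespace BooleanCube

variable {ι : Type}

def toReal (x : ι → Bool) : ι → ℝ := fun i => if x i then 1 else 0

noncomputable def evalOnCube : MvPolynomial ι ℝ →ₗ[ℝ] (ι → Bool) → ℝ :=
  LinearMap.pi fun x => (MvPolynomial.aeval (toReal x)).toLinearMap

@[simp] theorem evalOnCube_apply (P : MvPolynomial ι ℝ) (x : ι → Bool) :
    evalOnCube P x = MvPolynomial.eval (toReal x) P := by
  simp [evalOnCube]

variable (ι) in
noncomputable def degreeLE (k : ℕ) : Submodule ℝ ((ι → Bool) → ℝ) :=
  (MvPolynomial.restrictTotalDegree ι ℝ k).map evalOnCube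

def subcubeIndicator (S : Finset ι) (b : ι → Bool) : (ι → Bool) → ℝ :=
  fun x => if ∀ i ∈ S, x i = b i then 1 else 0

theorem subcubeIndicator_mem_degreeLE {k : ℕ} {S : Finset ι} (hS : #S ≤ k) (b : ι → Bool) :
    subcubeIndicator S b ∈ degreeLE ι k := by
  set P : MvPolynomial ι ℝ :=
    ∏ i ∈ S, if b i then MvPolynomial.X i else 1 - MvPolynomial.X i
  have hdeg : P.totalDegree ≤ #S := by
    refine (MvPolynomial.totalDegree_finsetProd _ _).trans ?_
    rw [Finset.card_eq_sum_ones]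
    refine Finset.sum_le_sum fun i _ => ?_
    split
    · exact (MvPolynomial.totalDegree_X i).le
    · exact (MvPolynomial.totalDegree_sub _ _).trans (by simp)
  have heval : evalOnCube P = subcubeIndicator S b := by
    ext x
    rw [evalOnCube_apply, map_prod, subcubeIndicator, ← Finset.prod_boole (M₀ := ℝ)]
    refine Finset.prod_congr rfl fun i _ => ?_
    cases hb : b i <;> cases hx : x i <;> simp [toReal, hx]
  exact heval ▸ Submodule.mem_map_of_mem ((MvPolynomial.mem_restrictTotalDegree _ _ _).2
    (hdeg.trans hS))

theorem evalOnCube_monomial (m : ι →₀ ℕ) (a : ℝ) :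
    evalOnCube (MvPolynomial.monomial m a) = a • subcubeIndicator m.support (fun _ => true) := by
  ext x
  rw [evalOnCube_apply, MvPolynomial.eval_monomial, Finsupp.prod, Pi.smul_apply, smul_eq_mul,
    subcubeIndicator, ← Finset.prod_boole (M₀ := ℝ)]
  congr 1
  refine Finset.prod_congr rfl fun i hi => ?_
  cases hx : x i <;> simp [toReal, hx, Finsupp.mem_support_iff.1 hi]

theorem degreeLE_eq_span (k : ℕ) : degreeLE ι k =
    Submodule.span ℝ {g | ∃ S b, #S ≤ k ∧ subcubeIndicator S b = g} := by
  refine le_antisymm ?_ (Submodule.span_le.2 ?_)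
  · rintro _ ⟨P, hP, rfl⟩
    rw [SetLike.mem_coe, MvPolynomial.mem_restrictTotalDegree] at hP
    rw [P.as_sum, map_sum]
    refine Submodule.sum_mem _ fun m hm => ?_
    rw [evalOnCube_monomial]
    exact Submodule.smul_mem _ _ (Submodule.subset_span
      ⟨_, _, (MvPolynomial.card_support_le_totalDegree hm).trans hP, rfl⟩)
  · rintro _ ⟨S, b, hS, rfl⟩
    exact subcubeIndicator_mem_degreeLE hS b

theorem const_mem_degreeLE (k : ℕ) (c : ℝ) : (fun _ => c) ∈ degreeLE ι k := by
  convert (degreeLE ι k).smul_mem c (subcubeIndicator_mem_degreeLE (Finset.card_empty.trans_le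
    k.zero_le) (fun _ => true)) using 1
  funext x
  simp [subcubeIndicator]

theorem exists_ge_mem_degreeLE [Finite ι] (k : ℕ) (y : (ι → Bool) → ℝ) :
    ∃ g : degreeLE ι k, y ≤ g := by
  obtain ⟨c, hc⟩ := Finite.bddAbove_range y
  exact ⟨⟨_, const_mem_degreeLE k c⟩, fun x => hc ⟨x, rfl⟩⟩

variable [Fintype ι]

noncomputable def productWeight (p : ℝ) : (ι → Bool) → ℝ :=
  fun x => ∏ i, if x i then p else 1 - p

theorem productWeight_nonneg {p : ℝ} (hp0 : 0 ≤ p) (hp1 : p ≤ 1) :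
    0 ≤ productWeight (ι := ι) p :=
  fun _ => Finset.prod_nonneg fun i _ => by split <;> linarith

variable [DecidableEq ι]

theorem productWeight_dotProduct_subcubeIndicator (p : ℝ) (S : Finset ι) (b : ι → Bool) :
    productWeight p ⬝ᵥ subcubeIndicator S b = ∏ i ∈ S, if b i then p else 1 - p := by
  set w : Bool → ℝ := fun c => if c then p else 1 - p
  set factor : ι → Bool → ℝ := fun i c => w c * if i ∈ S → c = b i then 1 else 0
  have hfactor (x : ι → Bool) :
      productWeight p x * subcubeIndicator S b x = ∏ i, factor i (x i) := by
    rw [Finset.prod_mul_distrib, Finset.prod_boole]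
    simp [productWeight, subcubeIndicator, w]
  have marginal (i : ι) : ∑ c, factor i c = if i ∈ S then w (b i) else 1 := by
    by_cases hi : i ∈ S <;> cases hb : b i <;> simp [factor, hi, hb, w]
  simp only [dotProduct, hfactor]
  rw [← Fintype.prod_sum factor, Finset.prod_congr rfl fun i _ => marginal i,
    Finset.prod_ite_mem, Finset.univ_inter]

noncomputable def productExpectationOnDegreeLE (k : ℕ) (p : ℝ) : ((ι → Bool) → ℝ) →ₗ.[ℝ] ℝ :=
  (dotProductEquiv ℝ (ι → Bool) (productWeight p)).toPMap (degreeLE ι k)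

theorem kwise_iff (k : ℕ) (p : ℝ) (Q : (ι → Bool) → ℝ) :
    kwise k p Q ↔ (∀ x, 0 ≤ Q x) ∧ ∀ g ∈ degreeLE ι k, Q ⬝ᵥ g = productWeight p ⬝ᵥ g := by
  have hsubcube (S : Finset ι) (b : ι → Bool) :
      ∑ x ∈ univ.filter (fun x => ∀ i ∈ S, x i = b i), Q x = Q ⬝ᵥ subcubeIndicator S b := by
    simp [dotProduct, subcubeIndicator, Finset.sum_filter]
  have hspan : (∀ g ∈ degreeLE ι k, Q ⬝ᵥ g = productWeight p ⬝ᵥ g) ↔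
      ∀ S : Finset ι, #S ≤ k → ∀ b,
        Q ⬝ᵥ subcubeIndicator S b = ∏ i ∈ S, if b i then p else 1 - p := by
    refine ⟨fun h S hS b => ?_, fun h g hg => ?_⟩
    · rw [h _ (subcubeIndicator_mem_degreeLE hS b), productWeight_dotProduct_subcubeIndicator]
    · rw [degreeLE_eq_span] at hg
      refine (LinearMap.eqOn_span_iff (f := dotProductEquiv ℝ _ Q)
        (g := dotProductEquiv ℝ _ (productWeight p))).2 ?_ hg
      rintro _ ⟨S, b, hS, rfl⟩
      simpa [productWeight_dotProduct_subcubeIndicator] using h S hS b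
  simp only [kwise, hsubcube, hspan]
  refine ⟨fun ⟨h0, _, h⟩ => ⟨h0, h⟩, fun ⟨h0, h⟩ => ⟨h0, ?_, h⟩⟩
  simpa [dotProduct, subcubeIndicator] using h ∅ (by simp) (fun _ => true)

theorem pr_eq_dotProduct (Q : (ι → Bool) → ℝ) (E : (ι → Bool) → Prop) [DecidablePred E] :
    pr Q E = Q ⬝ᵥ fun x => if E x then 1 else 0 := by
  unfold pr dotProduct
  refine Finset.sum_congr rfl fun x _ => ?_
  by_cases h : E x <;> simp [h]

theorem setOf_pr_kwise (k : ℕ) (p : ℝ) (E : (ι → Bool) → Prop) [DecidablePred E] :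
    {v | ∃ Q, kwise k p Q ∧ v = pr Q E} = {v | ∃ g : ((ι → Bool) → ℝ) →ₗ[ℝ] ℝ,
      (∀ x : (productExpectationOnDegreeLE (ι := ι) k p).domain,
        g ↑x = productExpectationOnDegreeLE k p x) ∧
      (∀ u, 0 ≤ u → 0 ≤ g u) ∧ v = g fun x => if E x then 1 else 0} := by
  ext v
  refine Iff.trans ?_ (dotProductEquiv ℝ (ι → Bool)).surjective.exists.symm
  simp only [Set.mem_ofPred_eq, kwise_iff, nonneg_iff_forall_dotProduct_nonneg, pr_eq_dotProduct,
    dotProductEquiv_apply_apply, Subtype.forall, and_assoc]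
  exact exists_congr fun _ => and_left_comm

theorem image_productExpectationOnDegreeLE (k : ℕ) (p : ℝ) (h : (ι → Bool) → ℝ) :
    productExpectationOnDegreeLE (ι := ι) k p '' {g | h ≤ ↑g} = {v | ∃ P : MvPolynomial ι ℝ,
      P.totalDegree ≤ k ∧ (∀ x, h x ≤ MvPolynomial.eval (toReal x) P) ∧
      v = ∑ x, (∏ i, if x i then p else 1 - p) * MvPolynomial.eval (toReal x) P} := by
  have hvalue (P : MvPolynomial ι ℝ) (hP : evalOnCube P ∈ degreeLE ι k) :
      ∑ x, (∏ i, if x i then p else 1 - p) * MvPolynomial.eval (toReal x) P =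
      productExpectationOnDegreeLE k p ⟨evalOnCube P, hP⟩ := by
    simp [productExpectationOnDegreeLE, dotProduct, productWeight]
  ext v
  constructor
  · rintro ⟨⟨_, P, hP, rfl⟩, hdom, rfl⟩
    exact ⟨P, (MvPolynomial.mem_restrictTotalDegree _ _ _).1 hP, fun x => by simpa using hdom x,
      hvalue P ⟨P, hP, rfl⟩⟩
  · rintro ⟨P, hP, hdom, rfl⟩
    exact ⟨⟨evalOnCube P, P, (MvPolynomial.mem_restrictTotalDegree _ _ _).2 hP, rfl⟩,
      fun x => by simpa using hdom x, (hvalue _ _).symm⟩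

end BooleanCube

open BooleanCube

/-- LP duality: the maximum of `Q(f = 1)` over `k`-wise independent distributions with
marginal `p` equals the minimum of `E_{P_p}[P]` over degree-`≤ k` real polynomials
dominating `f` on the boolean cube. -/
theorem kwise_duality (n k : ℕ) (p : ℝ) (hp0 : 0 < p) (hp1 : p < 1)
    (f : (Fin n → Bool) → Bool) :
    sSup {v : ℝ | ∃ Q : (Fin n → Bool) → ℝ, kwise k p Q ∧ v = pr Q (fun x => f x = true)}
      = sInf {v : ℝ | ∃ P : MvPolynomial (Fin n) ℝ, P.totalDegree ≤ k ∧
          (∀ x : Fin n → Bool,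
            (if f x then (1 : ℝ) else 0) ≤
              MvPolynomial.eval (fun i => if x i then (1 : ℝ) else 0) P) ∧
          v = ∑ x : Fin n → Bool,
            (∏ i, if x i then p else 1 - p) *
              MvPolynomial.eval (fun i => if x i then (1 : ℝ) else 0) P} := by
  have hdual := (productExpectationOnDegreeLE k p).isGreatest_nonneg_extension_apply
    (fun g hg => dotProduct_nonneg_of_nonneg (productWeight_nonneg hp0.le hp1.le) hg)
    (exists_ge_mem_degreeLE k) fun x => if f x then 1 else 0
  rw [setOf_pr_kwise]
  exact hdual.csSup_eq.trans (congrArg sInf (image_productExpectationOnDegreeLE k p _))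
end

section
/- For even k with n(1-p) ≤ k/2, the maximal probability M(n,k,p) that all n bits equal 1 under a k-wise independent distribution with marginal p satisfies M(n,k,p) ≤ 10·p^n. -/
open Finset
open scoped Classical

/-!
Write `q = 1 - p` and `K = k / 2`, and test `Q` against
`L x = ∑_{|S| ≤ K} p^{-|S|} ∏_{i ∈ S} (x_i - p)`. As `L ^ 2` only involves products of at most `k`
coordinates, its mean under a `k`-wise independent `Q` is the one under the product measure: the
characters `∏_{i ∈ S} (x_i - p)` are orthogonal with squared norm `(p q)^{|S|}`, so
`E[L ^ 2] = ∑_{|S| ≤ K} (q / p)^{|S|} = L 1`. Then `Q 1 * L 1 ^ 2 ≤ E[L ^ 2]` gives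
`Q 1 ≤ 1 / L 1 = p^n / P(Bin(n, q) ≤ K)`.

If `n ≤ k`, then `Q 1 = p^n` outright. Otherwise `n q ≤ K` forces `q ≤ 1/2`, and then
`P(Bin(n, q) ≤ K) ≥ 1/10`: by log-concavity the binomial terms in `(K, 3K]` are dominated, four at
a time, by those just below `K`, and the tail beyond `3K` is at most `(1 + q)^n / 2^(3K+1) ≤ 1/2`.
-/

noncomputable def binomTerm (n : ℕ) (q : ℝ) (j : ℕ) : ℝ :=
  n.choose j * q ^ j * (1 - q) ^ (n - j)

lemma sum_range_mul_le {c M : ℕ} {f g : ℕ → ℝ} (h : ∀ m < M, ∀ r < c, f (c * m + r) ≤ g m) :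
    ∑ i ∈ range (c * M), f i ≤ c * ∑ m ∈ range M, g m := by
  induction M with
  | zero => simp
  | succ M ih =>
    rw [mul_add_one, sum_range_add, sum_range_succ, mul_add]
    gcongr
    · exact ih fun m hm => h m (by omega)
    · simpa using sum_le_sum fun r hr => h M (by omega) r (mem_range.1 hr)

namespace binomTerm

variable {n : ℕ} {q : ℝ}

lemma nonneg (hq0 : 0 ≤ q) (hq1 : q ≤ 1) (j : ℕ) : 0 ≤ binomTerm n q j := by
  have : 0 ≤ 1 - q := by linarith
  unfold binomTerm; positivity

lemma eq_zero_of_lt {j : ℕ} (h : n < j) : binomTerm n q j = 0 := by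
  simp [binomTerm, Nat.choose_eq_zero_of_lt h]

lemma sum_range_succ_eq_one : ∑ j ∈ range (n + 1), binomTerm n q j = 1 := by
  have h := (add_pow q (1 - q) n).symm
  rw [add_sub_cancel, one_pow] at h
  rw [← h]
  refine sum_congr rfl fun j _ => ?_
  simp only [binomTerm]; ring

lemma sum_range_succ_mul_two_pow :
    ∑ j ∈ range (n + 1), binomTerm n q j * 2 ^ j = (1 + q) ^ n := by
  rw [show 1 + q = 2 * q + (1 - q) by ring, add_pow]
  refine sum_congr rfl fun j _ => ?_
  simp only [binomTerm, mul_pow]; ring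

lemma succ_mul (q : ℝ) (m : ℕ) :
    binomTerm n q (m + 1) * ((1 - q) * (m + 1)) = binomTerm n q m * (q * (n - m)) := by
  rcases lt_trichotomy m n with hm | rfl | hm
  · have hchoose : (n.choose (m + 1) : ℝ) * (m + 1) = n.choose m * (n - m) := by
      rw [← Nat.cast_sub hm.le]; exact_mod_cast Nat.choose_succ_right_eq n m
    have hpow : (1 - q) ^ (n - m) = (1 - q) ^ (n - (m + 1)) * (1 - q) := by
      rw [← pow_succ]; congr 1; omega
    simp only [binomTerm, hpow, pow_succ]
    linear_combination (q ^ m * q * (1 - q) ^ (n - (m + 1)) * (1 - q)) * hchoose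
  · simp [eq_zero_of_lt (Nat.lt_succ_self m)]
  · simp [eq_zero_of_lt hm, eq_zero_of_lt (hm.trans (Nat.lt_succ_self m))]

lemma succ_le (hq0 : 0 ≤ q) (hq1 : q < 1) {m : ℕ} (h : q * (n - m) ≤ (1 - q) * (m + 1)) :
    binomTerm n q (m + 1) ≤ binomTerm n q m := by
  have hD : 0 < (1 - q) * (m + 1) := by have := sub_pos.2 hq1; positivity
  refine le_of_mul_le_mul_right ?_ hD
  rw [succ_mul]
  exact mul_le_mul_of_nonneg_left h (nonneg hq0 hq1.le m)

lemma antitoneOn {K : ℕ} (hq0 : 0 ≤ q) (hq1 : q < 1) (hnq : n * q ≤ K) :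
    AntitoneOn (binomTerm n q) (Set.Ici K) :=
  antitoneOn_nat_Ici_of_succ_le fun m hm => succ_le hq0 hq1 <| by
    have : (K : ℝ) ≤ m := by exact_mod_cast hm
    nlinarith

lemma succ_le_of_le_succ (hq0 : 0 ≤ q) (hq1 : q < 1) {a b : ℕ}
    (hab : q * (n - a) * (q * (n - b)) ≤ (1 - q) * (a + 1) * ((1 - q) * (b + 1)))
    (h : binomTerm n q a ≤ binomTerm n q (b + 1)) :
    binomTerm n q (a + 1) ≤ binomTerm n q b := by
  rcases le_or_gt n a with ha | ha
  · rw [eq_zero_of_lt (Nat.lt_succ_of_le ha)]; exact nonneg hq0 hq1.le b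
  have hCa : 0 ≤ q * (n - a) := mul_nonneg hq0 (sub_nonneg.2 (by exact_mod_cast ha.le))
  have hD : ∀ m : ℕ, 0 < (1 - q) * (m + 1) := fun m => by have := sub_pos.2 hq1; positivity
  refine le_of_mul_le_mul_right (le_of_mul_le_mul_right ?_ (hD b)) (hD a)
  calc binomTerm n q (a + 1) * ((1 - q) * (a + 1)) * ((1 - q) * (b + 1))
      = binomTerm n q a * (q * (n - a)) * ((1 - q) * (b + 1)) := by rw [succ_mul]
    _ ≤ binomTerm n q (b + 1) * (q * (n - a)) * ((1 - q) * (b + 1)) := by gcongr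
    _ = binomTerm n q b * (q * (n - a) * (q * (n - b))) := by
        rw [mul_assoc, mul_comm (q * _), ← mul_assoc, succ_mul]; ring
    _ ≤ binomTerm n q b * ((1 - q) * (a + 1) * ((1 - q) * (b + 1))) :=
        mul_le_mul_of_nonneg_left hab (nonneg hq0 hq1.le b)
    _ = _ := by ring

lemma succ_le_of_le_succ_of_lt_le {K a b : ℕ} (hq0 : 0 ≤ q) (hq2 : 2 * q ≤ 1)
    (hnq : n * q ≤ K) (hKn : K ≤ n) (hbK : b < K) (hKa : K ≤ a)
    (hab : K * (2 * K - b) ≤ (a + 1) * (b + 1))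
    (h : binomTerm n q a ≤ binomTerm n q (b + 1)) :
    binomTerm n q (a + 1) ≤ binomTerm n q b := by
  have hbK' : (b : ℝ) < K := by exact_mod_cast hbK
  have hKa' : (K : ℝ) ≤ a := by exact_mod_cast hKa
  have hKn' : (K : ℝ) ≤ n := by exact_mod_cast hKn
  have hab' : (K : ℝ) * (2 * K - b) ≤ (a + 1) * (b + 1) := by
    rw [← Nat.cast_ofNat, ← Nat.cast_mul, ← Nat.cast_sub (by omega)]; exact_mod_cast hab
  have hCa : q * (n - a) ≤ (1 - q) * K := by nlinarith
  have hCb : q * (n - b) ≤ (1 - q) * (2 * K - b) := by nlinarith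
  refine succ_le_of_le_succ hq0 (by linarith) ?_ h
  calc q * (n - a) * (q * (n - b)) ≤ (1 - q) * K * ((1 - q) * (2 * K - b)) := by
        gcongr
        · exact mul_nonneg hq0 (by linarith)
        · nlinarith
    _ = (1 - q) ^ 2 * (K * (2 * K - b)) := by ring
    _ ≤ (1 - q) ^ 2 * ((a + 1) * (b + 1)) := by gcongr
    _ = (1 - q) * (a + 1) * ((1 - q) * (b + 1)) := by ring

lemma add_one_add_four_mul_le_sub_one_sub {K m : ℕ} (hq0 : 0 ≤ q) (hq2 : 2 * q ≤ 1)
    (hnq : n * q ≤ K) (hKn : K ≤ n) (hm : 4 * m + 1 ≤ 2 * K) :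
    binomTerm n q (K + 1 + 4 * m) ≤ binomTerm n q (K - 1 - m) := by
  induction m with
  | zero =>
    have h := succ_le_of_le_succ_of_lt_le (a := K) (b := K - 1) hq0 hq2 hnq hKn (by omega) le_rfl
      (by rw [show 2 * K - (K - 1) = K + 1 by omega, Nat.sub_add_cancel (by omega), mul_comm])
      (by rw [Nat.sub_add_cancel (by omega)])
    simpa using h
  | succ m ih =>
    obtain ⟨c, rfl⟩ : ∃ c, K = m + 2 + c := ⟨K - (m + 2), by omega⟩
    have hmc : 2 * m + 1 ≤ 2 * c := by omega
    have hstep : binomTerm n q (m + 2 + c + 4 + 4 * m) ≤ binomTerm n q (c + 1) := by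
      have hanti := antitoneOn hq0 (by linarith) hnq (a := m + 2 + c + 1 + 4 * m)
        (b := m + 2 + c + 4 + 4 * m) (Set.mem_Ici.2 (by omega))
        (Set.mem_Ici.2 (by omega)) (by omega)
      have := ih (by omega)
      rw [show m + 2 + c - 1 - m = c + 1 by omega] at this
      exact hanti.trans this
    have h := succ_le_of_le_succ_of_lt_le (a := m + 2 + c + 4 + 4 * m) (b := c) hq0 hq2 hnq hKn
      (by omega) (by omega)
      (by rw [show 2 * (m + 2 + c) - c = 2 * m + 4 + c by omega]
          nlinarith [Nat.mul_le_mul_left (m + 1) hmc]) hstep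
    rwa [show m + 2 + c + 1 + 4 * (m + 1) = m + 2 + c + 4 + 4 * m + 1 by ring,
      show m + 2 + c - 1 - (m + 1) = c by omega]

lemma sum_range_four_mul_le {K M : ℕ} (hq0 : 0 ≤ q) (hq2 : 2 * q ≤ 1) (hnq : n * q ≤ K)
    (hKn : K ≤ n) (hM : 4 * M ≤ 2 * K + 3) :
    ∑ i ∈ range (4 * M), binomTerm n q (K + 1 + i) ≤ 4 * ∑ j ∈ range K, binomTerm n q j := by
  have hblock : ∀ m < M, ∀ r < 4,
      binomTerm n q (K + 1 + (4 * m + r)) ≤ binomTerm n q (K - 1 - m) := fun m hm r hr =>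
    (antitoneOn hq0 (by linarith) hnq (Set.mem_Ici.2 (by omega)) (Set.mem_Ici.2 (by omega))
      (by omega)).trans (add_one_add_four_mul_le_sub_one_sub hq0 hq2 hnq hKn (by omega))
  calc ∑ i ∈ range (4 * M), binomTerm n q (K + 1 + i)
      ≤ 4 * ∑ m ∈ range M, binomTerm n q (K - 1 - m) := by exact_mod_cast sum_range_mul_le hblock
    _ ≤ 4 * ∑ m ∈ range K, binomTerm n q (K - 1 - m) := by
        gcongr
        · exact fun _ _ _ => nonneg hq0 (by linarith) _
        · omega
    _ = 4 * ∑ j ∈ range K, binomTerm n q j := by rw [sum_range_reflect]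

lemma sum_filter_le_le_one_add_pow_div (hq0 : 0 ≤ q) (hq1 : q ≤ 1) (A : ℕ) :
    ∑ j ∈ (range (n + 1)).filter (A ≤ ·), binomTerm n q j ≤ (1 + q) ^ n / 2 ^ A := by
  rw [← sum_range_succ_mul_two_pow, sum_div]
  calc ∑ j ∈ (range (n + 1)).filter (A ≤ ·), binomTerm n q j
      ≤ ∑ j ∈ (range (n + 1)).filter (A ≤ ·), binomTerm n q j * 2 ^ j / 2 ^ A := by
        refine sum_le_sum fun j hj => ?_
        rw [mul_div_assoc]
        refine le_mul_of_one_le_right (nonneg hq0 hq1 j) ?_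
        rw [one_le_div (by positivity)]
        exact pow_le_pow_right₀ one_le_two (mem_filter.1 hj).2
    _ ≤ ∑ j ∈ range (n + 1), binomTerm n q j * 2 ^ j / 2 ^ A :=
        sum_le_sum_of_subset_of_nonneg (filter_subset _ _) fun j _ _ => by
          have := nonneg hq0 hq1 (n := n) j; positivity
lemma sum_filter_le_le_half {K A : ℕ} (hq0 : 0 ≤ q) (hq1 : q ≤ 1) (hnq : n * q ≤ K)
    (hA : 3 * K + 1 ≤ A) :
    ∑ j ∈ (range (n + 1)).filter (A ≤ ·), binomTerm n q j ≤ 1 / 2 := by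
  have hexp : (1 + q) ^ n ≤ 8 ^ K :=
    calc (1 + q) ^ n ≤ Real.exp q ^ n := by gcongr; linarith [Real.add_one_le_exp q]
      _ = Real.exp (n * q) := by rw [Real.exp_nat_mul]
      _ ≤ Real.exp K := Real.exp_le_exp.2 hnq
      _ = Real.exp 1 ^ K := by rw [← Real.exp_nat_mul, mul_one]
      _ ≤ 8 ^ K := by gcongr; linarith [Real.exp_one_lt_three]
  calc ∑ j ∈ (range (n + 1)).filter (A ≤ ·), binomTerm n q j
      ≤ (1 + q) ^ n / 2 ^ A := sum_filter_le_le_one_add_pow_div hq0 hq1 A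
    _ ≤ 8 ^ K / 2 ^ (3 * K + 1) := by gcongr; norm_num
    _ = 1 / 2 := by rw [pow_succ, pow_mul]; field_simp; norm_num

theorem one_div_ten_le_sum_range {K : ℕ} (hq0 : 0 ≤ q) (hq2 : 2 * q ≤ 1) (hnq : n * q ≤ K) :
    1 / 10 ≤ ∑ j ∈ range (K + 1), binomTerm n q j := by
  have hq1 : q ≤ 1 := by linarith
  have hnonneg : ∀ j, 0 ≤ binomTerm n q j := nonneg hq0 hq1
  rcases le_or_gt n K with hnK | hKn
  · calc (1 / 10 : ℝ) ≤ ∑ j ∈ range (n + 1), binomTerm n q j := by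
          rw [sum_range_succ_eq_one]; norm_num
      _ ≤ _ := sum_le_sum_of_subset_of_nonneg (range_subset_range.2 (by omega))
          fun j _ _ => hnonneg j
  set M := (K + 1) / 2
  set A := K + 1 + 4 * M
  have htail := sum_filter_le_le_half hq0 hq1 hnq (A := A) (by omega)
  have hmid := sum_range_four_mul_le hq0 hq2 hnq hKn.le (M := M) (by omega)
  have hsplit : 1 ≤ ∑ j ∈ range A, binomTerm n q j
      + ∑ j ∈ (range (n + 1)).filter (A ≤ ·), binomTerm n q j := by
    rw [← sum_range_succ_eq_one (n := n) (q := q), ← sum_filter_not_add_sum_filter _ (A ≤ ·)]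
    gcongr
    · exact fun j _ _ => hnonneg j
    · intro j hj
      simp only [mem_filter, mem_range] at hj ⊢
      omega
  have hK : ∑ j ∈ range K, binomTerm n q j ≤ ∑ j ∈ range (K + 1), binomTerm n q j := by
    rw [sum_range_succ]; linarith [hnonneg K]
  rw [sum_range_add] at hsplit
  linarith

end binomTerm

section

variable {ι : Type} [Fintype ι]

lemma sum_filter_card_le (f : ℕ → ℝ) (K : ℕ) :
    ∑ S ∈ (univ : Finset (Finset ι)).filter (·.card ≤ K), f S.card =
      ∑ j ∈ range (K + 1), (Fintype.card ι).choose j * f j := by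
  rw [← sum_fiberwise_of_maps_to (g := card) (t := range (K + 1))
    fun S hS => by simp only [mem_filter, mem_range] at hS ⊢; omega]
  refine sum_congr rfl fun j hj => ?_
  have hfiber : ((univ : Finset (Finset ι)).filter (·.card ≤ K)).filter (·.card = j) =
      powersetCard j univ := by
    ext S
    simp only [mem_filter, mem_univ, true_and, mem_powersetCard, subset_univ, and_iff_right_iff_imp]
    simp only [mem_range] at hj
    omega
  rw [sum_congr rfl fun S hS => by rw [(mem_filter.1 hS).2], sum_const, hfiber, card_powersetCard,
    card_univ, nsmul_eq_mul]

lemma sum_filter_card_le_mul_pow_eq_sum_binomTerm {p : ℝ} (hp : p ≠ 0) (K : ℕ) :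
    (∑ S ∈ (univ : Finset (Finset ι)).filter (·.card ≤ K), ((1 - p) / p) ^ S.card) *
      p ^ Fintype.card ι = ∑ j ∈ range (K + 1), binomTerm (Fintype.card ι) (1 - p) j := by
  have hterm : ∀ S : Finset ι, ((1 - p) / p) ^ S.card * p ^ Fintype.card ι =
      (1 - p) ^ S.card * p ^ (Fintype.card ι - S.card) := fun S => by
    rw [← Nat.add_sub_cancel' (card_le_univ S), pow_add, Nat.add_sub_cancel_left, div_pow]
    field_simp
  rw [sum_mul, sum_congr rfl fun S _ => hterm S,
    sum_filter_card_le fun j => (1 - p) ^ j * p ^ (Fintype.card ι - j)]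
  refine sum_congr rfl fun j _ => ?_
  rw [binomTerm, sub_sub_cancel, mul_assoc]

variable [DecidableEq ι]

lemma pr_forall_eq_true (Q : (ι → Bool) → ℝ) :
    pr Q (fun x => ∀ i, x i = true) = Q (fun _ => true) := by
  simp [pr, ← funext_iff]

noncomputable def biasedChar (p : ℝ) (S : Finset ι) (x : ι → Bool) : ℝ :=
  ∏ i ∈ S, if x i then 1 - p else -p

namespace kwise

variable {k : ℕ} {p : ℝ} {Q : (ι → Bool) → ℝ}

lemma sum_mul_prod (hQ : kwise k p Q) {U : Finset ι} (hU : U.card ≤ k) (g : ι → Bool → ℝ) :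
    ∑ x, Q x * ∏ i ∈ U, g i (x i) = ∏ i ∈ U, (p * g i true + (1 - p) * g i false) := by
  have hcyl : ∀ V ∈ U.powerset,
      ∑ x, Q x * ∏ i ∈ V, (if x i = true then 1 else 0) = p ^ V.card := by
    intro V hV
    have h := hQ.2.2 V ((card_le_card (mem_powerset.1 hV)).trans hU) fun _ => true
    rw [sum_filter] at h
    simpa [prod_boole, mul_ite] using h
  have hexpand : ∀ x : ι → Bool, ∏ i ∈ U, g i (x i) = ∑ V ∈ U.powerset,
      (∏ i ∈ V, (g i true - g i false)) * (∏ i ∈ V, (if x i = true then 1 else 0)) *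
        ∏ i ∈ U \ V, g i false := by
    intro x
    have hg : ∀ i, g i (x i) = (g i true - g i false) * (if x i = true then 1 else 0) + g i false :=
      fun i => by cases x i <;> simp
    simp only [hg, prod_add, prod_mul_distrib]
  calc ∑ x, Q x * ∏ i ∈ U, g i (x i)
      = ∑ V ∈ U.powerset, (∏ i ∈ V, (g i true - g i false)) * (∏ i ∈ U \ V, g i false) *
          ∑ x, Q x * ∏ i ∈ V, (if x i = true then 1 else 0) := by
        simp only [hexpand, mul_sum]
        rw [sum_comm]
        refine sum_congr rfl fun V _ => sum_congr rfl fun x _ => ?_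
        ring
    _ = ∑ V ∈ U.powerset, (∏ i ∈ V, ((g i true - g i false) * p)) * ∏ i ∈ U \ V, g i false := by
        refine sum_congr rfl fun V hV => ?_
        rw [hcyl V hV, prod_mul_distrib, prod_const]
        ring
    _ = ∏ i ∈ U, (p * g i true + (1 - p) * g i false) := by
        rw [← prod_add]
        refine prod_congr rfl fun i _ => ?_
        ring

lemma apply_true_of_card_le (hQ : kwise k p Q) (h : Fintype.card ι ≤ k) :
    Q (fun _ => true) = p ^ Fintype.card ι := by
  have := hQ.sum_mul_prod (U := univ) (by simpa using h) fun _ c => if c then 1 else 0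
  simpa [prod_boole, ← funext_iff] using this

lemma sum_mul_biasedChar_mul (hQ : kwise k p Q) {S T : Finset ι} (hST : (S ∪ T).card ≤ k) :
    ∑ x, Q x * (biasedChar p S x * biasedChar p T x) =
      if S = T then (p * (1 - p)) ^ S.card else 0 := by
  set χ : Bool → ℝ := fun c => if c then 1 - p else -p
  have hprod : ∀ x : ι → Bool, biasedChar p S x * biasedChar p T x =
      ∏ i ∈ S ∪ T, (if i ∈ S then χ (x i) else 1) * (if i ∈ T then χ (x i) else 1) := fun x => by
    rw [prod_mul_distrib, prod_ite_mem, prod_ite_mem, union_inter_cancel_left,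
      union_inter_cancel_right]
    rfl
  have hmean :=
    hQ.sum_mul_prod hST fun i c => (if i ∈ S then χ c else 1) * (if i ∈ T then χ c else 1)
  simp only [← hprod] at hmean
  rw [hmean]
  split_ifs with h
  · subst h
    rw [union_self, ← prod_const (p * (1 - p))]
    refine prod_congr rfl fun i hi => ?_
    simp only [hi, χ, if_true, Bool.false_eq_true, if_false]
    ring
  · obtain ⟨i, hi⟩ : ∃ i, ¬(i ∈ S ↔ i ∈ T) := by
      by_contra! h'
      exact h (Finset.ext h')
    refine prod_eq_zero (i := i) (by rw [mem_union]; tauto) ?_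
    rcases (by tauto : i ∈ S ∧ i ∉ T ∨ i ∉ S ∧ i ∈ T) with ⟨hS, hT⟩ | ⟨hS, hT⟩ <;>
      simp [hS, hT, χ] <;> ring

lemma sum_mul_sq_sum_biasedChar (hQ : kwise k p Q) {𝒮 : Finset (Finset ι)}
    (h𝒮 : ∀ S ∈ 𝒮, ∀ T ∈ 𝒮, (S ∪ T).card ≤ k) (c : Finset ι → ℝ) :
    ∑ x, Q x * (∑ S ∈ 𝒮, c S * biasedChar p S x) ^ 2 =
      ∑ S ∈ 𝒮, c S ^ 2 * (p * (1 - p)) ^ S.card := by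
  calc ∑ x, Q x * (∑ S ∈ 𝒮, c S * biasedChar p S x) ^ 2
      = ∑ S ∈ 𝒮, ∑ T ∈ 𝒮, c S * c T * ∑ x, Q x * (biasedChar p S x * biasedChar p T x) := by
        simp_rw [sq, sum_mul_sum, mul_sum]
        rw [sum_comm]
        refine sum_congr rfl fun S _ => ?_
        rw [sum_comm]
        refine sum_congr rfl fun T _ => sum_congr rfl fun x _ => ?_
        ring
    _ = ∑ S ∈ 𝒮, c S ^ 2 * (p * (1 - p)) ^ S.card := by
        refine sum_congr rfl fun S hS => ?_
        rw [sum_congr rfl fun T hT =>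
          congrArg (c S * c T * ·) (hQ.sum_mul_biasedChar_mul (h𝒮 S hS T hT))]
        simp only [mul_ite, mul_zero]
        rw [sum_ite_eq 𝒮 S, if_pos hS, sq]

lemma apply_true_mul_sum_le_one (hQ : kwise k p Q) (hp : p ≠ 0) {K : ℕ} (hK : 2 * K ≤ k) :
    Q (fun _ => true) * ∑ S ∈ (univ : Finset (Finset ι)).filter (·.card ≤ K),
      ((1 - p) / p) ^ S.card ≤ 1 := by
  set 𝒮 : Finset (Finset ι) := univ.filter (·.card ≤ K)
  set A := ∑ S ∈ 𝒮, ((1 - p) / p) ^ S.card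
  have hunion : ∀ S ∈ 𝒮, ∀ T ∈ 𝒮, (S ∪ T).card ≤ k := fun S hS T hT => by
    simp only [𝒮, mem_filter] at hS hT
    exact (card_union_le S T).trans (by omega)
  set L : (ι → Bool) → ℝ := fun x => ∑ S ∈ 𝒮, p⁻¹ ^ S.card * biasedChar p S x
  have hL1 : L (fun _ => true) = A := sum_congr rfl fun S _ => by
    simp [biasedChar, mul_pow, div_eq_inv_mul]
  have hL2 : ∑ x, Q x * L x ^ 2 = A := by
    rw [hQ.sum_mul_sq_sum_biasedChar hunion]
    refine sum_congr rfl fun S _ => ?_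
    rw [← pow_mul, mul_comm _ 2, pow_mul, ← mul_pow]
    congr 1
    field_simp
  have hle : Q (fun _ => true) * A ^ 2 ≤ A := by
    have := single_le_sum (fun x _ => mul_nonneg (hQ.1 x) (sq_nonneg (L x)))
      (mem_univ fun _ => true)
    rwa [hL1, hL2] at this
  rcases le_or_gt A 0 with hA | hA
  · nlinarith [hQ.1 (fun _ => true)]
  · exact le_of_mul_le_mul_right (by linarith) hA

end kwise

end

theorem all_ones_bound_large_k_general (n k : ℕ) (hk : Even k) (p : ℝ) (hp1 : p ≤ 1)
    (hnk : (n : ℝ) * (1 - p) ≤ (k : ℝ) / 2)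
    (Q : (Fin n → Bool) → ℝ) (hQ : kwise k p Q) :
    pr Q (fun x => ∀ i, x i = true) ≤ 10 * p ^ n := by
  obtain ⟨K, rfl⟩ := hk
  have hnK : n * (1 - p) ≤ K := by push_cast at hnk; linarith
  have hQ1 : 0 ≤ Q (fun _ => true) := hQ.1 _
  rw [pr_forall_eq_true]
  rcases le_or_gt n (K + K) with hn | hn
  · have h := hQ.apply_true_of_card_le (by simpa using hn)
    rw [Fintype.card_fin] at h
    linarith
  have hq : 2 * (1 - p) ≤ 1 := by
    have : (2 * K + 1 : ℝ) ≤ n := by exact_mod_cast (by omega : 2 * K + 1 ≤ n)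
    nlinarith
  have hp : 0 < p := by linarith
  have hA := hQ.apply_true_mul_sum_le_one hp.ne' (K := K) (by omega)
  have hAp := sum_filter_card_le_mul_pow_eq_sum_binomTerm (ι := Fin n) hp.ne' K
  rw [Fintype.card_fin] at hAp
  have hbin := binomTerm.one_div_ten_le_sum_range (sub_nonneg.2 hp1) hq hnK
  nlinarith [pow_pos hp n]

/-- For even `k` with `n(1-p) ≤ k/2`, any `k`-wise independent distribution with
marginal `p` gives the all-ones vector probability at most `10 pⁿ`. -/
theorem all_ones_bound_large_k (n k : ℕ) (hk : Even k) (p : ℝ) (hp0 : 0 ≤ p) (hp1 : p ≤ 1)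
    (hnk : (n : ℝ) * (1 - p) ≤ (k : ℝ) / 2)
    (Q : (Fin n → Bool) → ℝ) (hQ : kwise k p Q) :
    pr Q (fun x => ∀ i, x i = true) ≤ 10 * p ^ n :=
  all_ones_bound_large_k_general n k hk p hp1 hnk Q hQ
end

section
/- If k < n and p ≤ 1/2, then there exists a k-wise independent distribution on n bits with marginal p under which the all-ones vector has probability exactly 0, i.e., m(n,k,p) = 0. -/
open Finset
open scoped Classical

/-- Factorization of a conditioned sum of a product over bits. -/
lemma sum_filter_prod {n : ℕ} (S : Finset (Fin n)) (b : Fin n → Bool) (f : Bool → ℝ) :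
    ∑ x ∈ univ.filter (fun x : Fin n → Bool => ∀ i ∈ S, x i = b i), ∏ i, f (x i)
      = (∏ i ∈ S, f (b i)) * (f false + f true) ^ Sᶜ.card := by
  classical
  set F : Fin n → Bool → ℝ := fun i c => if i ∈ S then (if c = b i then f c else 0) else f c
    with hF
  have key : ∑ x ∈ univ.filter (fun x : Fin n → Bool => ∀ i ∈ S, x i = b i), ∏ i, f (x i)
      = ∑ x : Fin n → Bool, ∏ i, F i (x i) := by
    rw [Finset.sum_filter]
    refine Finset.sum_congr rfl fun x _ => ?_
    by_cases h : ∀ i ∈ S, x i = b i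
    · rw [if_pos h]
      refine Finset.prod_congr rfl fun i _ => ?_
      simp only [hF]
      by_cases hi : i ∈ S
      · rw [if_pos hi, if_pos (h i hi)]
      · rw [if_neg hi]
    · rw [if_neg h]
      push_neg at h
      obtain ⟨i, hiS, hib⟩ := h
      refine (Finset.prod_eq_zero (Finset.mem_univ i) ?_).symm
      simp only [hF]
      rw [if_pos hiS, if_neg hib]
  have fact := Finset.prod_univ_sum (fun _ : Fin n => (Finset.univ : Finset Bool)) F
  rw [Fintype.piFinset_univ] at fact
  rw [key, ← fact, ← Finset.prod_mul_prod_compl S (fun i => ∑ j : Bool, F i j)]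
  congr 1
  · refine Finset.prod_congr rfl fun i hi => ?_
    simp only [hF, if_pos hi]
    rw [Finset.sum_ite_eq' Finset.univ (b i) f, if_pos (Finset.mem_univ _)]
  · rw [← Finset.prod_const]
    refine Finset.prod_congr rfl fun i hi => ?_
    have hi' : i ∉ S := Finset.mem_compl.mp hi
    simp only [hF, if_neg hi']
    rw [Fintype.sum_bool]
    ring

/-- For `k < n` and `p ≤ 1/2` there is a `k`-wise independent distribution with
marginal `p` under which the all-ones vector has probability exactly `0`. -/
theorem min_all_ones_zero (n k : ℕ) (hkn : k < n) (p : ℝ) (hp0 : 0 ≤ p) (hp : p ≤ 1 / 2) :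
    ∃ Q : (Fin n → Bool) → ℝ, kwise k p Q ∧ pr Q (fun x => ∀ i, x i = true) = 0 := by
  classical
  set f : Bool → ℝ := fun c => if c then p else 1 - p with hf
  set g : Bool → ℝ := fun c => if c then 1 else -1 with hg
  set Q : (Fin n → Bool) → ℝ := fun x => (∏ i, f (x i)) - p ^ n * ∏ i, g (x i) with hQ
  have hp1 : p ≤ 1 - p := by linarith
  have hn : 0 < n := lt_of_le_of_lt (Nat.zero_le k) hkn
  -- general conditioned sums
  have hsum : ∀ (S : Finset (Fin n)) (b : Fin n → Bool), S.card ≤ k →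
      ∑ x ∈ univ.filter (fun x : Fin n → Bool => ∀ i ∈ S, x i = b i), Q x
        = ∏ i ∈ S, f (b i) := by
    intro S b hS
    have hSc : 0 < Sᶜ.card := by
      have : S.card < Fintype.card (Fin n) := by
        rw [Fintype.card_fin]; exact lt_of_le_of_lt hS hkn
      rw [Finset.card_compl]; omega
    simp only [hQ, Finset.sum_sub_distrib, ← Finset.mul_sum]
    rw [sum_filter_prod S b f, sum_filter_prod S b g]
    have h1 : f false + f true = 1 := by simp [hf]
    have h2 : g false + g true = 0 := by simp [hg]
    rw [h1, h2, one_pow, mul_one, zero_pow (by omega : Sᶜ.card ≠ 0), mul_zero, mul_zero,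
      sub_zero]
  -- value of a product of f over a point
  have hprodf : ∀ x : Fin n → Bool, 0 ≤ ∏ i, f (x i) := by
    intro x
    refine Finset.prod_nonneg fun i _ => ?_
    by_cases h : x i <;> simp [hf, h] <;> linarith
  refine ⟨Q, ⟨?_, ?_, ?_⟩, ?_⟩
  · -- nonnegativity
    intro x
    set T : Finset (Fin n) := univ.filter (fun i => x i = true) with hT
    have hfx : ∏ i, f (x i) = p ^ T.card * (1 - p) ^ Tᶜ.card := by
      rw [← Finset.prod_mul_prod_compl T (fun i => f (x i))]
      congr 1
      · rw [← Finset.prod_const]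
        refine Finset.prod_congr rfl fun i hi => ?_
        have : x i = true := (Finset.mem_filter.mp hi).2
        simp [hf, this]
      · rw [← Finset.prod_const]
        refine Finset.prod_congr rfl fun i hi => ?_
        have : ¬ (x i = true) := by
          have := Finset.mem_compl.mp hi
          simpa [hT] using this
        simp [hf, Bool.eq_false_iff.mpr this]
    have hgx : ∏ i, g (x i) = (-1 : ℝ) ^ Tᶜ.card := by
      rw [← Finset.prod_mul_prod_compl T (fun i => g (x i))]
      have e1 : ∏ i ∈ T, g (x i) = 1 := by
        refine Finset.prod_eq_one fun i hi => ?_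
        have : x i = true := (Finset.mem_filter.mp hi).2
        simp [hg, this]
      have e2 : ∏ i ∈ Tᶜ, g (x i) = (-1 : ℝ) ^ Tᶜ.card := by
        rw [← Finset.prod_const]
        refine Finset.prod_congr rfl fun i hi => ?_
        have : ¬ (x i = true) := by
          have := Finset.mem_compl.mp hi
          simpa [hT] using this
        simp [hg, Bool.eq_false_iff.mpr this]
      rw [e1, e2, one_mul]
    have hcard : T.card + Tᶜ.card = n := by
      have := Finset.card_add_card_compl T
      simpa [Fintype.card_fin] using this
    simp only [hQ, hfx, hgx, sub_nonneg]
    rcases Nat.even_or_odd Tᶜ.card with he | ho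
    · rw [he.neg_one_pow, mul_one]
      calc p ^ n = p ^ T.card * p ^ Tᶜ.card := by rw [← pow_add, hcard]
        _ ≤ p ^ T.card * (1 - p) ^ Tᶜ.card :=
            mul_le_mul_of_nonneg_left (pow_le_pow_left₀ hp0 hp1 _) (pow_nonneg hp0 _)
    · rw [ho.neg_one_pow, mul_neg_one]
      have h1 : (0:ℝ) ≤ p ^ T.card * (1 - p) ^ Tᶜ.card :=
        mul_nonneg (pow_nonneg hp0 _) (pow_nonneg (by linarith) _)
      nlinarith [pow_nonneg hp0 n]
  · -- total mass 1
    have h0 := hsum ∅ (fun _ => true) (Nat.zero_le k)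
    simpa using h0
  · -- k-wise independence
    intro S hS b
    have h0 := hsum S b hS
    simp only [hf] at h0
    convert h0 using 2
    apply Finset.filter_congr_decidable
  · -- probability of all ones is 0
    unfold pr
    rw [Finset.sum_eq_single (fun _ => true : Fin n → Bool)]
    · simp [hQ, hf, hg]
    · intro x _ hx
      rw [if_neg (fun hall => hx (funext hall))]
    · intro h; exact absurd (Finset.mem_univ _) h
end

section
/- Rao-type bound: let B be an orthogonal array of strength k (k even) with q levels and n columns containing the all-zeros row, i.e., a uniformly chosen row of B has k-wise independent entries each uniform in GF(q). Then the number R of rows of B satisfies R ≥ q^n · P(Bin(n, 1 - 1/q) ≤ k/2). -/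
/-!
Fix a primitive additive character `ψ` of `F`. For `c` in the Hamming ball of radius `k / 2`, the
functions `r ↦ ψ (c ⬝ᵥ B r)` on the rows of the array are pairwise orthogonal: the inner product of
those for `c ≠ d` is `∑ r, ψ ((d - c) ⬝ᵥ B r)`, and since `d - c` has weight at most `k`, strength
`k` makes the restriction of a random row to the support of `d - c` uniform, so the sum factors
into complete character sums, which vanish. Being linearly independent in `ℂ ^ R`, these functions
number at most `R`, while the ball has `∑_{j ≤ k/2} C(n, j) (q - 1) ^ j` points; multiplied out,
this is `qⁿ · P(Bin(n, 1 - 1/q) ≤ k/2)`.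
-/

open Finset

section HammingBall

variable {ι β : Type*} [Fintype ι] [DecidableEq ι] [Fintype β] [DecidableEq β] [Zero β]

theorem card_filter_support_eq (S : Finset ι) :
    #{c : ι → β | ({j | c j ≠ 0} : Finset ι) = S} = (Fintype.card β - 1) ^ #S := by
  have hfiber : ({c : ι → β | ({j | c j ≠ 0} : Finset ι) = S} : Finset (ι → β))
      = Fintype.piFinset fun j => if j ∈ S then univ.erase 0 else {0} := by
    ext c
    simp only [mem_filter, mem_univ, true_and, Fintype.mem_piFinset, Finset.ext_iff]
    refine forall_congr' fun j => ?_
    split_ifs with hj <;> simp [hj]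
  rw [hfiber, Fintype.card_piFinset]
  simp [apply_ite Finset.card, prod_ite_mem, card_erase_of_mem]

theorem card_filter_hammingNorm_eq (m : ℕ) :
    #{c : ι → β | hammingNorm c = m}
      = (Fintype.card ι).choose m * (Fintype.card β - 1) ^ m := by
  have hsupport : Set.MapsTo (fun c : ι → β => ({j | c j ≠ 0} : Finset ι))
      (({c | hammingNorm c = m} : Finset (ι → β)) : Set (ι → β))
      ((powersetCard m univ : Finset (Finset ι)) : Set (Finset ι)) :=
    fun c hc => mem_powersetCard_univ.mpr (mem_filter.mp hc).2
  rw [card_eq_sum_card_fiberwise hsupport, ← smul_eq_mul, ← card_univ, ← card_powersetCard,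
    ← sum_const]
  refine sum_congr rfl fun S hS => ?_
  rw [← (mem_powersetCard_univ.mp hS), ← card_filter_support_eq, filter_filter]
  congr 1
  exact filter_congr fun c _ => and_iff_right_of_imp fun h => h ▸ rfl

theorem card_filter_hammingNorm_le (m : ℕ) :
    #{c : ι → β | hammingNorm c ≤ m}
      = ∑ j ∈ range (m + 1), (Fintype.card ι).choose j * (Fintype.card β - 1) ^ j := by
  rw [card_eq_sum_card_fiberwise (f := hammingNorm) (t := range (m + 1))
    fun c hc => mem_range_succ_iff.mpr (mem_filter.mp hc).2]
  refine sum_congr rfl fun j hj => ?_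
  rw [← card_filter_hammingNorm_eq, filter_filter]
  congr 1
  exact filter_congr fun c _ => and_iff_right_of_imp fun h => h ▸ mem_range_succ_iff.mp hj

end HammingBall

theorem hammingDist_le_hammingNorm_add_hammingNorm {ι β : Type*} [Fintype ι] [DecidableEq β]
    [Zero β] (x y : ι → β) : hammingDist x y ≤ hammingNorm x + hammingNorm y :=
  (hammingDist_triangle x 0 y).trans_eq (by rw [hammingDist_zero_right, hammingDist_zero_left])

theorem AddChar.map_sum_eq_prod {A M κ : Type*} [AddCommMonoid A] [CommMonoid M]
    (ψ : AddChar A M) (s : Finset κ) (f : κ → A) : ψ (∑ i ∈ s, f i) = ∏ i ∈ s, ψ (f i) :=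
  map_prod ψ.toMonoidHom (fun i => Multiplicative.ofAdd (f i)) s

section OrthogonalArray

variable {ι Ω : Type*} [Fintype ι] [Fintype Ω]

def IsOrthogonalArray {β : Type*} [Fintype β] [DecidableEq β] (B : Ω → ι → β) (k : ℕ) : Prop :=
  ∀ S : Finset ι, #S ≤ k → ∀ c : ι → β,
    #{r | ∀ j ∈ S, B r j = c j} * Fintype.card β ^ #S = Fintype.card Ω

theorem IsOrthogonalArray.card_pow_smul_sum_restrict [DecidableEq ι] {β : Type*} [Fintype β]
    [DecidableEq β] [Nonempty β] {B : Ω → ι → β} {k : ℕ} (hB : IsOrthogonalArray B k)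
    {S : Finset ι} (hS : #S ≤ k) {M : Type*} [AddCommMonoid M] (f : (S → β) → M) :
    Fintype.card β ^ #S • ∑ r, f (S.restrict (B r)) = Fintype.card Ω • ∑ v, f v := by
  rw [← sum_fiberwise univ (fun r => S.restrict (B r)), smul_sum, smul_sum]
  refine sum_congr rfl fun v _ => ?_
  obtain ⟨c, rfl⟩ : ∃ c : ι → β, S.restrict c = v :=
    ⟨fun j => if h : j ∈ S then v ⟨j, h⟩ else Classical.arbitrary β, by ext; simp⟩
  rw [sum_congr rfl fun r hr => congrArg f (mem_filter.mp hr).2, sum_const, smul_smul,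
    ← hB S hS c, mul_comm]
  congr 2
  simp only [funext_iff, Subtype.forall, Finset.restrict]
  -- the two filters differ only in their `Decidable` instances
  congr

variable {F : Type*} [Field F] [Fintype F] [DecidableEq F] {B : Ω → ι → F} {k : ℕ}

theorem IsOrthogonalArray.sum_addChar_dotProduct_eq_zero {K : Type*} [CommRing K] [IsDomain K]
    [CharZero K] {ψ : AddChar F K} (hψ : ψ.IsPrimitive) (hB : IsOrthogonalArray B k)
    {e : ι → F} (he : e ≠ 0) (hek : hammingNorm e ≤ k) :
    ∑ r, ψ (e ⬝ᵥ B r) = 0 := by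
  classical
  set S : Finset ι := {j | e j ≠ 0}
  have hlocal (x : ι → F) : ψ (e ⬝ᵥ x) = ∏ j : S, ψ (e j * x j) := by
    rw [dotProduct, ← sum_filter_of_ne fun j _ h => left_ne_zero_of_mul h, ← sum_coe_sort,
      AddChar.map_sum_eq_prod]
  obtain ⟨j₀, hj₀⟩ : ∃ j, e j ≠ 0 := Function.ne_iff.mp he
  have hfactor : ∑ x, ψ (e j₀ * x) = 0 := by
    simpa [mul_comm, hj₀] using AddChar.sum_mulShift (e j₀) hψ
  have hscaled : Fintype.card F ^ #S • ∑ r, ψ (e ⬝ᵥ B r) = 0 :=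
    calc Fintype.card F ^ #S • ∑ r, ψ (e ⬝ᵥ B r)
        = Fintype.card F ^ #S • ∑ r, ∏ j : S, ψ (e j * S.restrict (B r) j) := by
          simp_rw [hlocal]; rfl
      _ = Fintype.card Ω • ∑ v : S → F, ∏ j : S, ψ (e j * v j) :=
          hB.card_pow_smul_sum_restrict (S := S) hek fun v => ∏ j : S, ψ (e j * v j)
      _ = Fintype.card Ω • ∏ j : S, ∑ x, ψ (e j * x) := by rw [Fintype.prod_sum]
      _ = 0 := by
          rw [prod_eq_zero (mem_univ ⟨j₀, by simpa [S] using hj₀⟩) hfactor, smul_zero]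
  simpa [Fintype.card_ne_zero] using hscaled

open ComplexConjugate in
theorem IsOrthogonalArray.sum_addChar_dotProduct_mul_conj_eq_zero {ψ : AddChar F ℂ}
    (hψ : ψ.IsPrimitive) (hB : IsOrthogonalArray B k) {c d : ι → F} (hne : c ≠ d)
    (hdist : hammingDist c d ≤ k) :
    ∑ r, ψ (d ⬝ᵥ B r) * conj (ψ (c ⬝ᵥ B r)) = 0 := by
  have hcharacter (r : Ω) : ψ (d ⬝ᵥ B r) * conj (ψ (c ⬝ᵥ B r)) = ψ ((-c + d) ⬝ᵥ B r) := by
    rw [← AddChar.map_neg_eq_conj, mul_comm, ← AddChar.map_add_eq_mul, add_dotProduct,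
      neg_dotProduct]
  rw [sum_congr rfl fun r _ => hcharacter r]
  exact hB.sum_addChar_dotProduct_eq_zero hψ (neg_add_eq_zero.not.mpr hne)
    (hammingDist_eq_hammingNorm c d ▸ hdist)

theorem IsOrthogonalArray.linearIndependent_addChar_dotProduct [Nonempty Ω] {ψ : AddChar F ℂ}
    (hψ : ψ.IsPrimitive) (hB : IsOrthogonalArray B k) {C : Set (ι → F)}
    (hC : ∀ c ∈ C, ∀ d ∈ C, hammingDist c d ≤ k) :
    LinearIndependent ℂ fun c : C => fun r => ψ (c.1 ⬝ᵥ B r) := by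
  refine RCLike.linearIndependent_of_ne_zero_of_wInner_one_eq_zero
    (fun c h => ?_) fun c d hne => ?_
  · simpa using congrArg norm (congrFun h (Classical.arbitrary Ω))
  · dsimp only
    rw [RCLike.wInner_one_eq_sum]
    simpa [RCLike.inner_apply] using hB.sum_addChar_dotProduct_mul_conj_eq_zero hψ
      (Subtype.coe_ne_coe.mpr hne) (hC c c.2 d d.2)

theorem IsOrthogonalArray.card_le_card_of_hammingDist_le [Nonempty Ω]
    (hB : IsOrthogonalArray B k) {C : Finset (ι → F)}
    (hC : ∀ c ∈ C, ∀ d ∈ C, hammingDist c d ≤ k) : #C ≤ Fintype.card Ω := by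
  obtain ⟨ψ, hψ⟩ : ∃ ψ : AddChar F ℂ, ψ ≠ 1 := by
    obtain ⟨ψ, hψ⟩ := AddChar.exists_apply_ne_zero.mpr (one_ne_zero (α := F))
    exact ⟨ψ, fun h => hψ (by simp [h])⟩
  simpa [Module.finrank_fintype_fun_eq_card] using
    (hB.linearIndependent_addChar_dotProduct (.of_ne_one hψ) (C := C) hC).fintype_card_le_finrank

end OrthogonalArray

theorem pow_mul_choose_mul_one_sub_one_div_pow_mul_one_div_pow {q : ℝ} (hq : q ≠ 0) (n j : ℕ) :
    q ^ n * (n.choose j * (1 - 1 / q) ^ j * (1 / q) ^ (n - j)) = n.choose j * (q - 1) ^ j := by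
  rcases le_or_gt j n with hjn | hnj
  · obtain ⟨i, rfl⟩ := Nat.exists_eq_add_of_le hjn
    rw [Nat.add_sub_cancel_left, pow_add, one_sub_div hq, div_pow, one_div_pow]
    field_simp
  · simp [Nat.choose_eq_zero_of_lt hnj]

theorem rao_bound_general (F : Type) [Field F] [Fintype F] [DecidableEq F]
    (q : ℕ) (hq : q = Fintype.card F)
    (R n k : ℕ) (hR : 0 < R)
    (B : Fin R → Fin n → F)
    (hOA : ∀ S : Finset (Fin n), S.card ≤ k → ∀ c : Fin n → F,
      ((univ.filter (fun r : Fin R => ∀ j ∈ S, B r j = c j)).card : ℝ) / R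
        = (1 / (q : ℝ)) ^ S.card) :
    (R : ℝ) ≥ (q : ℝ) ^ n * ∑ j ∈ Finset.range (k / 2 + 1),
        (n.choose j : ℝ) * (1 - 1 / (q : ℝ)) ^ j * (1 / (q : ℝ)) ^ (n - j) := by
  subst hq
  have hq0 : (Fintype.card F : ℝ) ≠ 0 := by positivity
  have hB : IsOrthogonalArray B k := fun S hS c => by
    have h := hOA S hS c
    rw [div_eq_iff (by positivity), one_div_pow, one_div_mul_eq_div,
      eq_div_iff (by positivity)] at h
    have hnat : #{r | ∀ j ∈ S, B r j = c j} * Fintype.card F ^ #S = R := by exact_mod_cast h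
    rw [Fintype.card_fin]
    -- the two filters differ only in their `Decidable` instances
    convert hnat
  have : Nonempty (Fin R) := Fin.pos_iff_nonempty.mp hR
  have hball := hB.card_le_card_of_hammingDist_le (C := {c | hammingNorm c ≤ k / 2})
    fun c hc d hd => (hammingDist_le_hammingNorm_add_hammingNorm c d).trans <| by
      simp only [mem_filter, mem_univ, true_and] at hc hd
      omega
  rw [card_filter_hammingNorm_le, Fintype.card_fin, Fintype.card_fin, ← Nat.cast_le (α := ℝ)]
    at hball
  push_cast [Nat.cast_sub Fintype.card_pos] at hball
  rw [ge_iff_le, mul_sum,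
    sum_congr rfl fun j _ => pow_mul_choose_mul_one_sub_one_div_pow_mul_one_div_pow hq0 n j]
  exact hball

/-- Rao-type bound: let `B : Fin R → Fin n → F` be an orthogonal array of even strength
`k` over a finite field `F` with `q` elements (a uniformly chosen row has `k`-wise
independent entries, each uniform in `F`), containing the all-zeros row. Then
`R ≥ qⁿ · P(Bin(n, 1 - 1/q) ≤ k/2)`. -/
theorem rao_bound (F : Type) [Field F] [Fintype F] [DecidableEq F]
    (q : ℕ) (hq : q = Fintype.card F)
    (R n k : ℕ) (hR : 0 < R) (hk : Even k)
    (B : Fin R → Fin n → F)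
    (hzero : ∃ r0 : Fin R, ∀ j : Fin n, B r0 j = 0)
    (hOA : ∀ S : Finset (Fin n), S.card ≤ k → ∀ c : Fin n → F,
      ((univ.filter (fun r : Fin R => ∀ j ∈ S, B r j = c j)).card : ℝ) / R
        = (1 / (q : ℝ)) ^ S.card) :
    (R : ℝ) ≥ (q : ℝ) ^ n * ∑ j ∈ Finset.range (k / 2 + 1),
        (n.choose j : ℝ) * (1 - 1 / (q : ℝ)) ^ j * (1 / (q : ℝ)) ^ (n - j) :=
  rao_bound_general F q hq R n k hR B hOA
end
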